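/- Dominance implies greediness is optimal: if 2s₂ ≤ s₁, then for every tie-breaking setting X and every heap size h ≥ s₁, the greedy move s₁ attains the maximum in the recursion, i.e. o¹_X(h) = s₁ + o²_{d(X)}(h − s₁). -/

import Mathlib

inductive TB : Type
  | FvF | FvA | AvF | AvA
deriving DecidableEq

def TB.dual : TB → TB
  | .FvF => .FvF
  | .FvA => .AvF
  | .AvF => .FvA
  | .AvA => .AvA

/-- `true` iff the current mover is friendly (first letter F). -/
def TB.friendly : TB → Bool
  | .FvF => true
  | .FvA => true
  | .AvF => false
  | .AvA => false

/-- PSPE outcome pair `(o¹_X h, o²_X h)` for subtraction set `S`. -/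
def outc (S : Finset ℕ) (h : ℕ) (X : TB) : ℕ × ℕ :=
  let M := S.filter fun s => 0 < s ∧ s ≤ h
  if hM : M.Nonempty then
    have hA : M.attach.Nonempty := (Finset.attach_nonempty_iff).mpr hM
    let f : {s // s ∈ M} → ℕ := fun s =>
      have hs : h - s.1 < h := by
        have h1 := (Finset.mem_filter.mp s.2).2
        omega
      s.1 + (outc S (h - s.1) X.dual).2
    let o1 := M.attach.sup f
    let Mstar := M.attach.filter fun s => f s = o1
    have hMs : Mstar.Nonempty := by
      obtain ⟨b, hb, hbe⟩ := Finset.exists_mem_eq_sup M.attach hA f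
      exact ⟨b, Finset.mem_filter.mpr ⟨hb, hbe.symm⟩⟩
    let g : {s // s ∈ M} → ℕ := fun s =>
      have hs : h - s.1 < h := by
        have h1 := (Finset.mem_filter.mp s.2).2
        omega
      (outc S (h - s.1) X.dual).1
    if X.friendly then (o1, Mstar.sup g) else (o1, Mstar.inf' hMs g)
  else (0, 0)
termination_by h

/-- First player's PSPE utility. -/
def o1 (S : Finset ℕ) (X : TB) (h : ℕ) : ℕ := (outc S h X).1

/-- Second player's PSPE utility. -/
def o2 (S : Finset ℕ) (X : TB) (h : ℕ) : ℕ := (outc S h X).2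

/-!
Write `greedy s₂ s₁ h` for the outcome pair (mover, opponent) when both players always remove the
largest legal amount. If `2 * s₂ ≤ s₁`, then at every heap `h ≥ s₁` the move `s₂` gives the mover
at most what `s₁` gives, and if it gives as much it also leaves the opponent the same payoff.
So, by strong induction on `h`, every tie-breaking rule produces the greedy outcome, and `s₁` is
always a maximiser. The comparison is checked directly for `h < 3 * s₁`; beyond that it
propagates, since two greedy rounds add `s₁` to both payoffs.
-/

section Maximiser

variable {ι α β : Type*} [SemilatticeSup α] [OrderBot α] [DecidableEq α]
  {t : Finset ι} {f : ι → α} {g : ι → β} {i : ι}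

theorem Finset.forall_mem_filter_sup_eq (hi : i ∈ t)
    (hmax : ∀ j ∈ t, f j ≤ f i ∧ (f j = f i → g j = g i)) :
    i ∈ t.filter (fun j => f j = t.sup f) ∧ ∀ j ∈ t.filter (fun j => f j = t.sup f), g j = g i := by
  have hsup := sup_eq_of_isMaxOn hi (isMaxOn_iff.mpr fun j hj => (hmax j hj).1)
  refine ⟨Finset.mem_filter.mpr ⟨hi, hsup.symm⟩, fun j hj => ?_⟩
  rw [Finset.mem_filter, hsup] at hj
  exact (hmax j hj.1).2 hj.2

theorem Finset.sup_filter_sup_eq [SemilatticeSup β] [OrderBot β] (hi : i ∈ t)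
    (hmax : ∀ j ∈ t, f j ≤ f i ∧ (f j = f i → g j = g i)) :
    (t.filter fun j => f j = t.sup f).sup g = g i := by
  obtain ⟨hiF, hconst⟩ := Finset.forall_mem_filter_sup_eq hi hmax
  rw [Finset.sup_congr rfl hconst, Finset.sup_const ⟨i, hiF⟩]

theorem Finset.inf'_filter_sup_eq [SemilatticeInf β] (hi : i ∈ t)
    (hmax : ∀ j ∈ t, f j ≤ f i ∧ (f j = f i → g j = g i)) (H) :
    (t.filter fun j => f j = t.sup f).inf' H g = g i := by
  obtain ⟨-, hconst⟩ := Finset.forall_mem_filter_sup_eq hi hmax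
  rw [Finset.inf'_congr H rfl hconst, Finset.inf'_const]

end Maximiser

theorem outc_of_forall_lt {S : Finset ℕ} {h : ℕ} (hS : ∀ s ∈ S, 0 < s → h < s) (X : TB) :
    outc S h X = (0, 0) := by
  rw [outc, dif_neg]
  rintro ⟨s, hs⟩
  rw [Finset.mem_filter] at hs
  exact absurd hs.2.2 (not_le.mpr (hS s hs.1 hs.2.1))

theorem outc_eq_of_forall_le {S : Finset ℕ} {h s : ℕ} (hs : s ∈ S) (hs0 : 0 < s) (hsh : s ≤ h)
    (X : TB)
    (hmax : ∀ t ∈ S, 0 < t → t ≤ h →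
      t + (outc S (h - t) X.dual).2 ≤ s + (outc S (h - s) X.dual).2 ∧
        (t + (outc S (h - t) X.dual).2 = s + (outc S (h - s) X.dual).2 →
          (outc S (h - t) X.dual).1 = (outc S (h - s) X.dual).1)) :
    outc S h X = (s + (outc S (h - s) X.dual).2, (outc S (h - s) X.dual).1) := by
  have hsM : s ∈ S.filter fun t => 0 < t ∧ t ≤ h := Finset.mem_filter.mpr ⟨hs, hs0, hsh⟩
  have hi := Finset.mem_attach _ ⟨s, hsM⟩
  have hmax' : ∀ t ∈ (S.filter fun t => 0 < t ∧ t ≤ h).attach, _ := fun t _ =>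
    let ⟨htS, ht0, hth⟩ := Finset.mem_filter.mp t.2
    hmax t.1 htS ht0 hth
  rw [outc, dif_pos ⟨s, hsM⟩]
  dsimp only
  rw [Finset.sup_filter_sup_eq hi hmax', Finset.inf'_filter_sup_eq hi hmax',
    sup_eq_of_isMaxOn hi (isMaxOn_iff.mpr fun t ht => (hmax' t ht).1)]
  split <;> rfl

def greedy (s₂ s₁ h : ℕ) : ℕ × ℕ :=
  if _ : 0 < s₁ ∧ s₁ ≤ h then
    (s₁ + (greedy s₂ s₁ (h - s₁)).2, (greedy s₂ s₁ (h - s₁)).1)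
  else if _ : 0 < s₂ ∧ s₂ ≤ h then
    (s₂ + (greedy s₂ s₁ (h - s₂)).2, (greedy s₂ s₁ (h - s₂)).1)
  else (0, 0)
termination_by h
decreasing_by all_goals omega

namespace greedy

variable {s₂ s₁ h : ℕ}

theorem of_lt (s₂ s₁ h : ℕ) (h₂ : h < s₂) (h₁ : h < s₁) : greedy s₂ s₁ h = (0, 0) := by
  rw [greedy, dif_neg (by omega), dif_neg (by omega)]

theorem take_small (s₂ s₁ k h : ℕ) (hpos : 0 < s₂) (hk : k + s₂ = h) (h₁ : h < s₁) :
    (greedy s₂ s₁ h).1 = s₂ + (greedy s₂ s₁ k).2 ∧ (greedy s₂ s₁ h).2 = (greedy s₂ s₁ k).1 := by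
  subst hk
  rw [greedy, dif_neg (by omega), dif_pos (by omega), Nat.add_sub_cancel]
  exact ⟨rfl, rfl⟩

theorem take_big (s₂ s₁ k h : ℕ) (hpos : 0 < s₁) (hk : k + s₁ = h) :
    (greedy s₂ s₁ h).1 = s₁ + (greedy s₂ s₁ k).2 ∧ (greedy s₂ s₁ h).2 = (greedy s₂ s₁ k).1 := by
  subst hk
  rw [greedy, dif_pos (by omega), Nat.add_sub_cancel]
  exact ⟨rfl, rfl⟩

theorem fst_add_snd_le (s₂ s₁ h : ℕ) : (greedy s₂ s₁ h).1 + (greedy s₂ s₁ h).2 ≤ h := by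
  induction h using Nat.strong_induction_on with
  | _ h ih =>
    rw [greedy]
    split_ifs
    · have := ih (h - s₁) (by omega); dsimp only; omega
    · have := ih (h - s₂) (by omega); dsimp only; omega
    · exact Nat.zero_le _

theorem le_fst (hle : s₂ ≤ s₁) (h₂ : s₂ ≤ h) : s₂ ≤ (greedy s₂ s₁ h).1 := by
  rw [greedy]
  split_ifs <;> omega

theorem add_two_mul (hpos : 0 < s₁) (h : ℕ) :
    greedy s₂ s₁ (h + 2 * s₁) = ((greedy s₂ s₁ h).1 + s₁, (greedy s₂ s₁ h).2 + s₁) := by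
  obtain ⟨e₁, e₂⟩ := take_big s₂ s₁ (h + s₁) (h + 2 * s₁) hpos (by omega)
  obtain ⟨e₃, e₄⟩ := take_big s₂ s₁ h (h + s₁) hpos rfl
  ext <;> dsimp only <;> omega

-- Each case unfolds the greedy play from `h - s₂` and from `h - s₁` until both reach a common
-- heap or a heap smaller than `s₂`.
theorem small_move_le_big_move_of_lt_three_mul (hpos : 0 < s₂) (hdom : 2 * s₂ ≤ s₁)
    (h₁ : s₁ ≤ h) (h₃ : h < 3 * s₁) :
    s₂ + (greedy s₂ s₁ (h - s₂)).2 ≤ s₁ + (greedy s₂ s₁ (h - s₁)).2 ∧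
      (s₂ + (greedy s₂ s₁ (h - s₂)).2 = s₁ + (greedy s₂ s₁ (h - s₁)).2 →
        (greedy s₂ s₁ (h - s₂)).1 = (greedy s₂ s₁ (h - s₁)).1) := by
  have hs₁ : 0 < s₁ := by omega
  rcases lt_or_ge h (s₁ + s₂) with hA | hA
  · obtain ⟨-, e₁⟩ := take_small s₂ s₁ (h - 2 * s₂) (h - s₂) hpos (by omega) (by omega)
    have := fst_add_snd_le s₂ s₁ (h - 2 * s₂)
    rw [of_lt s₂ s₁ (h - s₁) (by omega) (by omega)]
    dsimp only
    omega
  rcases lt_or_ge h (2 * s₁) with hB | hB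
  · obtain ⟨-, e₁⟩ := take_big s₂ s₁ (h - s₁ - s₂) (h - s₂) hs₁ (by omega)
    obtain ⟨-, e₂⟩ := take_small s₂ s₁ (h - s₁ - s₂) (h - s₁) hpos (by omega) (by omega)
    omega
  obtain ⟨e₁, e₂⟩ := take_big s₂ s₁ (h - s₁ - s₂) (h - s₂) hs₁ (by omega)
  rcases lt_or_ge h (2 * s₁ + s₂) with hC | hC
  · obtain ⟨e₃, e₄⟩ := take_small s₂ s₁ (h - s₁ - 2 * s₂) (h - s₁ - s₂) hpos (by omega) (by omega)
    obtain ⟨e₅, e₆⟩ := take_big s₂ s₁ (h - 2 * s₁) (h - s₁) hs₁ (by omega)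
    rw [of_lt s₂ s₁ (h - 2 * s₁) (by omega) (by omega)] at e₅ e₆
    dsimp only at e₅ e₆
    rcases lt_or_ge (h - s₁ - 2 * s₂) s₂ with hD | hD
    · rw [of_lt s₂ s₁ (h - s₁ - 2 * s₂) hD (by omega)] at e₃ e₄
      dsimp only at e₃ e₄
      omega
    · have := fst_add_snd_le s₂ s₁ (h - s₁ - 2 * s₂)
      have := le_fst (s₁ := s₁) (by omega) hD
      omega
  · obtain ⟨e₃, e₄⟩ := take_big s₂ s₁ (h - 2 * s₁ - s₂) (h - s₁ - s₂) hs₁ (by omega)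
    obtain ⟨e₅, e₆⟩ := take_big s₂ s₁ (h - 2 * s₁) (h - s₁) hs₁ (by omega)
    obtain ⟨e₇, e₈⟩ := take_small s₂ s₁ (h - 2 * s₁ - s₂) (h - 2 * s₁) hpos (by omega) (by omega)
    omega

theorem small_move_le_big_move (hpos : 0 < s₂) (hdom : 2 * s₂ ≤ s₁) (h : ℕ) (h₁ : s₁ ≤ h) :
    s₂ + (greedy s₂ s₁ (h - s₂)).2 ≤ s₁ + (greedy s₂ s₁ (h - s₁)).2 ∧
      (s₂ + (greedy s₂ s₁ (h - s₂)).2 = s₁ + (greedy s₂ s₁ (h - s₁)).2 →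
        (greedy s₂ s₁ (h - s₂)).1 = (greedy s₂ s₁ (h - s₁)).1) := by
  induction h using Nat.strong_induction_on with
  | _ h ih =>
    by_cases h₃ : h < 3 * s₁
    · exact small_move_le_big_move_of_lt_three_mul hpos hdom h₁ h₃
    · have hshift : ∀ s ≤ s₁, h - s = (h - 2 * s₁ - s) + 2 * s₁ := fun s hs => by omega
      rw [hshift s₂ (by omega), hshift s₁ le_rfl, add_two_mul (by omega), add_two_mul (by omega)]
      have := ih (h - 2 * s₁) (by omega) (by omega)
      dsimp only
      omega

end greedy

theorem outc_pair_eq_greedy {s₂ s₁ : ℕ} (hpos : 0 < s₂) (hdom : 2 * s₂ ≤ s₁) (h : ℕ) (X : TB) :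
    outc {s₂, s₁} h X = greedy s₂ s₁ h := by
  induction h using Nat.strong_induction_on generalizing X with
  | _ h ih =>
    have ih' (s : ℕ) (hs : 0 < s) (hsh : s ≤ h) :
        outc {s₂, s₁} (h - s) X.dual = greedy s₂ s₁ (h - s) :=
      ih _ (by omega) _
    have hmem (t : ℕ) (ht : t ∈ ({s₂, s₁} : Finset ℕ)) : t = s₂ ∨ t = s₁ := by
      simpa only [Finset.mem_insert, Finset.mem_singleton] using ht
    rcases lt_or_ge h s₂ with h₂ | h₂
    · rw [outc_of_forall_lt (fun t ht _ => by rcases hmem t ht with rfl | rfl <;> omega) X,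
        greedy.of_lt s₂ s₁ h h₂ (by omega)]
    rcases lt_or_ge h s₁ with h₁ | h₁
    · obtain ⟨e₁, e₂⟩ := greedy.take_small s₂ s₁ (h - s₂) h hpos (by omega) h₁
      rw [outc_eq_of_forall_le (s := s₂) (by simp) hpos h₂ X ?_, ih' s₂ hpos h₂]
      · exact Prod.ext e₁.symm e₂.symm
      · intro t ht _ hth
        obtain rfl : t = s₂ := (hmem t ht).resolve_right (by omega)
        exact ⟨le_rfl, fun _ => rfl⟩
    · obtain ⟨e₁, e₂⟩ := greedy.take_big s₂ s₁ (h - s₁) h (by omega) (by omega)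
      rw [outc_eq_of_forall_le (s := s₁) (by simp) (by omega) h₁ X ?_, ih' s₁ (by omega) h₁]
      · exact Prod.ext e₁.symm e₂.symm
      · intro t ht _ _
        rcases hmem t ht with rfl | rfl
        · rw [ih' t hpos (by omega), ih' s₁ (by omega) h₁]
          exact greedy.small_move_le_big_move hpos hdom h h₁
        · exact ⟨le_rfl, fun _ => rfl⟩

theorem stmt2_general (s₂ s₁ : ℕ) (hpos : 0 < s₂) (hdom : 2 * s₂ ≤ s₁)
    (X : TB) (h : ℕ) (hh : s₁ ≤ h) :
    o1 {s₂, s₁} X h = s₁ + o2 {s₂, s₁} X.dual (h - s₁) := by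
  rw [o1, o2, outc_pair_eq_greedy hpos hdom, outc_pair_eq_greedy hpos hdom]
  exact (greedy.take_big s₂ s₁ (h - s₁) h (by omega) (Nat.sub_add_cancel hh)).1

theorem stmt2 (s₂ s₁ : ℕ) (hpos : 0 < s₂) (hlt : s₂ < s₁) (hdom : 2 * s₂ ≤ s₁)
    (X : TB) (h : ℕ) (hh : s₁ ≤ h) :
    o1 {s₂, s₁} X h = s₁ + o2 {s₂, s₁} X.dual (h - s₁) :=
  stmt2_general s₂ s₁ hpos hdom X h hh
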